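/- Let θ : ℝ² → ℝ be given by θ(x,t) = (x/R + φ(t))², where φ is smooth and R > 0. For a ∈ ℝ and smooth compactly supported f : ℝ² → ℂ, define S_a f = -3a(θₓ fₓ)ₓ - a³θₓ³ f - aθₓₓₓ f - aθₜ f and A_a f = fₜ + fₓₓₓ + 3a²θₓ² fₓ + 3a²θₓθₓₓ f. Then the commutator satisfies [S_a, A_a]f = 9a(θₓₓ fₓₓ)ₓₓ + ((6aθₓₜ - 18a³θₓ²θₓₓ) fₓ)ₓ + (-3a³θₓₓ³ + aθₜₜ + 6a³θₓ²θₓₜ + 9a⁵θₓ⁴θₓₓ) f. -/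

import Mathlib

open Complex

/-- Partial derivative in the first (spatial) variable, complex-valued. -/
noncomputable def pdx (u : ℝ → ℝ → ℂ) : ℝ → ℝ → ℂ := fun x t => deriv (fun y => u y t) x

/-- Iterated spatial partial derivative, complex-valued. -/
noncomputable def pdxn (n : ℕ) (u : ℝ → ℝ → ℂ) : ℝ → ℝ → ℂ :=
  fun x t => iteratedDeriv n (fun y => u y t) x

/-- Partial derivative in the second (time) variable, complex-valued. -/
noncomputable def pdt (u : ℝ → ℝ → ℂ) : ℝ → ℝ → ℂ := fun x t => deriv (fun s => u x s) t

/-- Spatial partial derivative, real-valued. -/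
noncomputable def pdxR (u : ℝ → ℝ → ℝ) : ℝ → ℝ → ℝ := fun x t => deriv (fun y => u y t) x

/-- Time partial derivative, real-valued. -/
noncomputable def pdtR (u : ℝ → ℝ → ℝ) : ℝ → ℝ → ℝ := fun x t => deriv (fun s => u x s) t

/-- The symmetric operator `S_a` associated to the weight `θ`. -/
noncomputable def Sop (a : ℝ) (θ : ℝ → ℝ → ℝ) (f : ℝ → ℝ → ℂ) : ℝ → ℝ → ℂ :=
  fun x t =>
    -3 * a * pdx (fun y s => (pdxR θ y s : ℂ) * pdx f y s) x t
      - a ^ 3 * (pdxR θ x t : ℂ) ^ 3 * f x t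
      - a * (pdxR (pdxR (pdxR θ)) x t : ℂ) * f x t
      - a * (pdtR θ x t : ℂ) * f x t

/-- The antisymmetric operator `A_a` associated to the weight `θ`. -/
noncomputable def Aop (a : ℝ) (θ : ℝ → ℝ → ℝ) (f : ℝ → ℝ → ℂ) : ℝ → ℝ → ℂ :=
  fun x t =>
    pdt f x t + pdxn 3 f x t + 3 * a ^ 2 * (pdxR θ x t : ℂ) ^ 2 * pdx f x t
      + 3 * a ^ 2 * (pdxR θ x t : ℂ) * (pdxR (pdxR θ) x t : ℂ) * f x t

open Complex Function

/-- Smooth complex-valued two-variable function. -/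
def Sm (u : ℝ → ℝ → ℂ) : Prop := ContDiff ℝ (⊤ : ℕ∞) (Function.uncurry u)

section basic
variable {u v : ℝ → ℝ → ℂ} {x t : ℝ}

lemma one_le_infty : (1 : WithTop ℕ∞) ≤ ((⊤ : ℕ∞) : WithTop ℕ∞) := by
  exact_mod_cast le_top

lemma infty_add_one : ((⊤ : ℕ∞) : WithTop ℕ∞) + 1 ≤ ((⊤ : ℕ∞) : WithTop ℕ∞) := by
  norm_num

lemma hasDerivAt_sx (hu : Sm u) (x t : ℝ) :
    HasDerivAt (fun y => u y t) (fderiv ℝ (uncurry u) (x, t) (1, 0)) x := by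
  have h := (hu.differentiable (by simp) (x, t)).hasFDerivAt
  have hg : HasDerivAt (fun y : ℝ => ((y, t) : ℝ × ℝ)) ((1 : ℝ), (0 : ℝ)) x :=
    (hasDerivAt_id x).prodMk (hasDerivAt_const x t)
  exact h.comp_hasDerivAt x hg

lemma hasDerivAt_st (hu : Sm u) (x t : ℝ) :
    HasDerivAt (fun s => u x s) (fderiv ℝ (uncurry u) (x, t) (0, 1)) t := by
  have h := (hu.differentiable (by simp) (x, t)).hasFDerivAt
  have hg : HasDerivAt (fun s : ℝ => ((x, s) : ℝ × ℝ)) ((0 : ℝ), (1 : ℝ)) t :=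
    (hasDerivAt_const t x).prodMk (hasDerivAt_id t)
  exact h.comp_hasDerivAt t hg

lemma pdx_eq (hu : Sm u) (x t : ℝ) : pdx u x t = fderiv ℝ (uncurry u) (x, t) (1, 0) :=
  (hasDerivAt_sx hu x t).deriv

lemma pdt_eq (hu : Sm u) (x t : ℝ) : pdt u x t = fderiv ℝ (uncurry u) (x, t) (0, 1) :=
  (hasDerivAt_st hu x t).deriv

lemma Sm.dx (hu : Sm u) : DifferentiableAt ℝ (fun y => u y t) x :=
  (hasDerivAt_sx hu x t).differentiableAt

lemma Sm.dt (hu : Sm u) : DifferentiableAt ℝ (fun s => u x s) t :=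
  (hasDerivAt_st hu x t).differentiableAt

lemma Sm.pdx (hu : Sm u) : Sm (pdx u) := by
  have : uncurry (_root_.pdx u) = fun p : ℝ × ℝ =>
      (ContinuousLinearMap.apply ℝ ℂ ((1 : ℝ), (0 : ℝ))) (fderiv ℝ (uncurry u) p) := by
    funext p
    exact pdx_eq hu p.1 p.2
  rw [Sm, this]
  exact (ContinuousLinearMap.apply ℝ ℂ ((1 : ℝ), (0 : ℝ))).contDiff.comp
    (hu.fderiv_right infty_add_one)

lemma Sm.pdt (hu : Sm u) : Sm (pdt u) := by
  have : uncurry (_root_.pdt u) = fun p : ℝ × ℝ =>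
      (ContinuousLinearMap.apply ℝ ℂ ((0 : ℝ), (1 : ℝ))) (fderiv ℝ (uncurry u) p) := by
    funext p
    exact pdt_eq hu p.1 p.2
  rw [Sm, this]
  exact (ContinuousLinearMap.apply ℝ ℂ ((0 : ℝ), (1 : ℝ))).contDiff.comp
    (hu.fderiv_right infty_add_one)

lemma Sm_pdxF (hu : Sm u) : Sm (pdx u) := hu.pdx
lemma Sm_pdtF (hu : Sm u) : Sm (pdt u) := hu.pdt
lemma Sm_addF (hu : Sm u) (hv : Sm v) : Sm (fun x t => u x t + v x t) := ContDiff.add hu hv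
lemma Sm_mulF (hu : Sm u) (hv : Sm v) : Sm (fun x t => u x t * v x t) := ContDiff.mul hu hv
lemma Sm_negF (hu : Sm u) : Sm (fun x t => -u x t) := ContDiff.neg hu
lemma Sm_subF (hu : Sm u) (hv : Sm v) : Sm (fun x t => u x t - v x t) := ContDiff.sub hu hv
lemma Sm_powF (hu : Sm u) (n : ℕ) : Sm (fun x t => u x t ^ n) := ContDiff.pow hu n
lemma Sm_const (c : ℂ) : Sm (fun _ _ => c) := contDiff_const

lemma Sm_cast {g : ℝ → ℝ → ℝ} (hg : ContDiff ℝ (⊤ : ℕ∞) (uncurry g)) :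
    Sm (fun x t => ((g x t : ℝ) : ℂ)) := Complex.ofRealCLM.contDiff.comp hg

lemma pdx_add_fun (hu : Sm u) (hv : Sm v) :
    pdx (fun y s => u y s + v y s) = fun y s => pdx u y s + pdx v y s := by
  funext y s; exact deriv_add hu.dx hv.dx

lemma pdt_add_fun (hu : Sm u) (hv : Sm v) :
    pdt (fun y s => u y s + v y s) = fun y s => pdt u y s + pdt v y s := by
  funext y s; exact deriv_add hu.dt hv.dt

lemma pdx_sub_fun (hu : Sm u) (hv : Sm v) :
    pdx (fun y s => u y s - v y s) = fun y s => pdx u y s - pdx v y s := by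
  funext y s; exact deriv_sub hu.dx hv.dx

lemma pdt_sub_fun (hu : Sm u) (hv : Sm v) :
    pdt (fun y s => u y s - v y s) = fun y s => pdt u y s - pdt v y s := by
  funext y s; exact deriv_sub hu.dt hv.dt

lemma pdx_neg_fun : pdx (fun y s => -u y s) = fun y s => -pdx u y s := by
  funext y s; exact deriv.neg

lemma pdt_neg_fun : pdt (fun y s => -u y s) = fun y s => -pdt u y s := by
  funext y s; exact deriv.neg

lemma pdx_mul_fun (hu : Sm u) (hv : Sm v) :
    pdx (fun y s => u y s * v y s) = fun y s => pdx u y s * v y s + u y s * pdx v y s := by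
  funext y s; exact deriv_mul hu.dx hv.dx

lemma pdt_mul_fun (hu : Sm u) (hv : Sm v) :
    pdt (fun y s => u y s * v y s) = fun y s => pdt u y s * v y s + u y s * pdt v y s := by
  funext y s; exact deriv_mul hu.dt hv.dt

lemma pdx_sq_fun (hu : Sm u) :
    pdx (fun y s => u y s ^ 2) = fun y s => pdx u y s * u y s + u y s * pdx u y s := by
  have h : (fun y s : ℝ => u y s ^ 2) = fun y s => u y s * u y s := by funext y s; ring
  rw [h, pdx_mul_fun hu hu]

lemma pdt_sq_fun (hu : Sm u) :
    pdt (fun y s => u y s ^ 2) = fun y s => pdt u y s * u y s + u y s * pdt u y s := by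
  have h : (fun y s : ℝ => u y s ^ 2) = fun y s => u y s * u y s := by funext y s; ring
  rw [h, pdt_mul_fun hu hu]

lemma pdx_cube_fun (hu : Sm u) :
    pdx (fun y s => u y s ^ 3) = fun y s =>
      (pdx u y s * u y s + u y s * pdx u y s) * u y s + u y s * u y s * pdx u y s := by
  have h : (fun y s : ℝ => u y s ^ 3) = fun y s => u y s * u y s * u y s := by
    funext y s; ring
  rw [h, pdx_mul_fun (Sm_mulF hu hu) hu, pdx_mul_fun hu hu]

lemma pdt_cube_fun (hu : Sm u) :
    pdt (fun y s => u y s ^ 3) = fun y s =>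
      (pdt u y s * u y s + u y s * pdt u y s) * u y s + u y s * u y s * pdt u y s := by
  have h : (fun y s : ℝ => u y s ^ 3) = fun y s => u y s * u y s * u y s := by
    funext y s; ring
  rw [h, pdt_mul_fun (Sm_mulF hu hu) hu, pdt_mul_fun hu hu]

lemma pdx_const_fun (c : ℂ) : pdx (fun _ _ => c) = (0 : ℝ → ℝ → ℂ) := by
  funext y s; exact deriv_const y c

lemma pdt_const_fun (c : ℂ) : pdt (fun _ _ => c) = (0 : ℝ → ℝ → ℂ) := by
  funext y s; exact deriv_const s c

lemma pdxn_two (u : ℝ → ℝ → ℂ) : pdxn 2 u = pdx (pdx u) := by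
  funext x t
  simp only [pdxn, pdx, iteratedDeriv_succ, iteratedDeriv_zero]

lemma pdxn_three (u : ℝ → ℝ → ℂ) : pdxn 3 u = pdx (pdx (pdx u)) := by
  funext x t
  simp only [pdxn, pdx, iteratedDeriv_succ, iteratedDeriv_zero]

lemma pdt_pdx_fun (hu : Sm u) : pdt (pdx u) = pdx (pdt u) := by
  funext x t
  have hder : ContDiff ℝ (⊤ : ℕ∞) (fderiv ℝ (uncurry u)) :=
    hu.fderiv_right infty_add_one
  have symm : fderiv ℝ (fderiv ℝ (uncurry u)) (x, t) (1, 0) (0, 1)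
      = fderiv ℝ (fderiv ℝ (uncurry u)) (x, t) (0, 1) (1, 0) :=
    (hu.contDiffAt.isSymmSndFDerivAt (by rw [minSmoothness_of_isRCLikeNormedField]; exact WithTop.coe_le_coe.mpr le_top)) _ _
  have hdf : HasFDerivAt (fderiv ℝ (uncurry u)) (fderiv ℝ (fderiv ℝ (uncurry u)) (x, t)) (x, t) :=
    (hder.differentiable (by simp) (x, t)).hasFDerivAt
  have e1 : pdx (pdt u) x t = fderiv ℝ (fderiv ℝ (uncurry u)) (x, t) (1, 0) (0, 1) := by
    have hL := ((ContinuousLinearMap.apply ℝ ℂ ((0 : ℝ), (1 : ℝ))).hasFDerivAt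
      (x := fderiv ℝ (uncurry u) (x, t))).comp (x, t) hdf
    have huv : uncurry (pdt u) = (ContinuousLinearMap.apply ℝ ℂ ((0 : ℝ), (1 : ℝ)))
        ∘ (fderiv ℝ (uncurry u)) := by
      funext p; exact pdt_eq hu p.1 p.2
    rw [pdx_eq hu.pdt x t, huv, hL.fderiv]
    simp
  have e2 : pdt (pdx u) x t = fderiv ℝ (fderiv ℝ (uncurry u)) (x, t) (0, 1) (1, 0) := by
    have hL := ((ContinuousLinearMap.apply ℝ ℂ ((1 : ℝ), (0 : ℝ))).hasFDerivAt
      (x := fderiv ℝ (uncurry u) (x, t))).comp (x, t) hdf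
    have huv : uncurry (pdx u) = (ContinuousLinearMap.apply ℝ ℂ ((1 : ℝ), (0 : ℝ)))
        ∘ (fderiv ℝ (uncurry u)) := by
      funext p; exact pdx_eq hu p.1 p.2
    rw [pdt_eq hu.pdx x t, huv, hL.fderiv]
    simp
  rw [e1, e2, symm]

lemma pdx_cast_fun {g g' : ℝ → ℝ → ℝ} (h : ∀ y s, HasDerivAt (fun z => g z s) (g' y s) y) :
    pdx (fun y s => ((g y s : ℝ) : ℂ)) = fun y s => ((g' y s : ℝ) : ℂ) := by
  funext y s
  exact (Complex.ofRealCLM.hasFDerivAt.comp_hasDerivAt y (h y s)).deriv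

lemma pdt_cast_fun {g g' : ℝ → ℝ → ℝ} (h : ∀ y s, HasDerivAt (fun σ => g y σ) (g' y s) s) :
    pdt (fun y s => ((g y s : ℝ) : ℂ)) = fun y s => ((g' y s : ℝ) : ℂ) := by
  funext y s
  exact (Complex.ofRealCLM.hasFDerivAt.comp_hasDerivAt s (h y s)).deriv

end basic

section keysec
variable {u v : ℝ → ℝ → ℂ}

lemma pdxC_add (hu : Sm u) (hv : Sm v) : pdx (u + v) = pdx u + pdx v :=
  pdx_add_fun hu hv

lemma pdxC_sub (hu : Sm u) (hv : Sm v) : pdx (u - v) = pdx u - pdx v := by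
  funext y s; exact deriv_sub hu.dx hv.dx

lemma pdxC_mul (hu : Sm u) (hv : Sm v) : pdx (u * v) = pdx u * v + u * pdx v :=
  pdx_mul_fun hu hv

lemma pdtC_add (hu : Sm u) (hv : Sm v) : pdt (u + v) = pdt u + pdt v :=
  pdt_add_fun hu hv

lemma pdtC_sub (hu : Sm u) (hv : Sm v) : pdt (u - v) = pdt u - pdt v := by
  funext y s; exact deriv_sub hu.dt hv.dt

lemma pdtC_mul (hu : Sm u) (hv : Sm v) : pdt (u * v) = pdt u * v + u * pdt v :=
  pdt_mul_fun hu hv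

lemma Sm_addC (hu : Sm u) (hv : Sm v) : Sm (u + v) := Sm_addF hu hv
lemma Sm_subC (hu : Sm u) (hv : Sm v) : Sm (u - v) := Sm_subF hu hv
lemma Sm_mulC (hu : Sm u) (hv : Sm v) : Sm (u * v) := Sm_mulF hu hv

lemma key (a q : ℂ) (f p s0 r w0 AF SF : ℝ → ℝ → ℂ)
    (hf : Sm f) (hp : Sm p) (hs : Sm s0) (hr : Sm r)
    (hpx : pdx p = fun _ _ => q) (hpt : pdt p = s0)
    (hsx : pdx s0 = (0 : ℝ → ℝ → ℂ))
    (hrx : pdx r = s0) (hrt : pdt r = w0)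
    (hAF : AF = pdt f + pdx (pdx (pdx f)) + (fun (_ _ : ℝ) => 3 * a ^ 2) * p ^ 2 * pdx f
      + (fun (_ _ : ℝ) => 3 * a ^ 2) * p * (fun (_ _ : ℝ) => q) * f)
    (hSF : SF = (fun (_ _ : ℝ) => -3 * a) * pdx (p * pdx f) - (fun (_ _ : ℝ) => a ^ 3) * p ^ 3 * f
      - (fun (_ _ : ℝ) => a) * r * f)
    (x t : ℝ) :
    -3 * a * pdx (p * pdx AF) x t - a ^ 3 * p x t ^ 3 * AF x t - a * r x t * AF x t
        - (pdt SF x t + pdx (pdx (pdx SF)) x t + 3 * a ^ 2 * p x t ^ 2 * pdx SF x t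
            + 3 * a ^ 2 * p x t * q * SF x t)
      = 9 * a * pdx (pdx ((fun (_ _ : ℝ) => q) * pdx (pdx f))) x t
          + pdx (((fun (_ _ : ℝ) => 6 * a) * s0
              - (fun (_ _ : ℝ) => 18 * a ^ 3) * p ^ 2 * (fun (_ _ : ℝ) => q)) * pdx f) x t
          + (-3 * a ^ 3 * q ^ 3 + a * w0 x t + 6 * a ^ 3 * p x t ^ 2 * s0 x t
              + 9 * a ^ 5 * p x t ^ 4 * q) * f x t := by
  subst hAF hSF
  have e2 : p ^ 2 = p * p := pow_two p
  have e3 : p ^ 3 = p * p * p := pow_three' p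
  rw [e2, e3]
  simp (config := { maxDischargeDepth := 40 }) only [pdxC_add, pdxC_sub, pdxC_mul, pdtC_add, pdtC_sub, pdtC_mul,
    pdt_pdx_fun, pdx_const_fun, pdt_const_fun,
    hpx, hpt, hsx, hrx, hrt,
    hf, hp, hs, hr, Sm_const, Sm_addC, Sm_subC, Sm_mulC, Sm_pdxF, Sm_pdtF,
    zero_mul, mul_zero, zero_add, add_zero, neg_zero, sub_zero, zero_sub]
  simp only [Pi.add_apply, Pi.sub_apply, Pi.mul_apply, Pi.zero_apply, Pi.neg_apply]
  ring
end keysec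

theorem commutator_Sa_Aa (R : ℝ) (hR : 0 < R) (φ : ℝ → ℝ) (hφ : ContDiff ℝ (⊤ : ℕ∞) φ)
    (a : ℝ) (f : ℝ → ℝ → ℂ)
    (hf : ContDiff ℝ (⊤ : ℕ∞) (Function.uncurry f))
    (hfc : HasCompactSupport (Function.uncurry f))
    (θ : ℝ → ℝ → ℝ) (hθ : θ = fun x t => (x / R + φ t) ^ 2) :
    ∀ x t : ℝ,
      Sop a θ (Aop a θ f) x t - Aop a θ (Sop a θ f) x t
        = 9 * a * pdxn 2 (fun y s => (pdxR (pdxR θ) y s : ℂ) * pdxn 2 f y s) x t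
          + pdx (fun y s =>
              ((6 * a * pdtR (pdxR θ) y s
                - 18 * a ^ 3 * (pdxR θ y s) ^ 2 * pdxR (pdxR θ) y s : ℝ) : ℂ) * pdx f y s) x t
          + ((-3 * a ^ 3 * (pdxR (pdxR θ) x t) ^ 3 + a * pdtR (pdtR θ) x t
                + 6 * a ^ 3 * (pdxR θ x t) ^ 2 * pdtR (pdxR θ) x t
                + 9 * a ^ 5 * (pdxR θ x t) ^ 4 * pdxR (pdxR θ) x t : ℝ) : ℂ) * f x t := by
  subst hθ
  intro x t
  have hφi : ContDiff ℝ ((⊤ : ℕ∞) : WithTop ℕ∞) φ := hφ.of_le (by simp)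
  have hdφ : ∀ s, HasDerivAt φ (deriv φ s) s :=
    fun s => (hφi.differentiable (by simp) s).hasDerivAt
  have hφ' : ContDiff ℝ ((⊤ : ℕ∞) : WithTop ℕ∞) (deriv φ) :=
    (contDiff_infty_iff_deriv.mp hφi).2
  have hdφ' : ∀ s, HasDerivAt (deriv φ) (deriv (deriv φ) s) s :=
    fun s => (hφ'.differentiable (by simp) s).hasDerivAt
  have hSmf : Sm f := hf.of_le (by simp)
  -- derivatives of the weight θ
  have hP : pdxR (fun x t => (x / R + φ t) ^ 2) = fun x t => 2 * (x / R + φ t) / R := by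
    funext y s
    show deriv (fun z => (z / R + φ s) ^ 2) y = _
    exact ((((hasDerivAt_id y).div_const R).add_const (φ s)).pow 2).deriv.trans
      (by first | (simp only [id_eq]; push_cast; ring) | (push_cast; ring) | ring)
  have hPP' : pdxR (fun x t => 2 * (x / R + φ t) / R) = fun _ _ => 2 / R ^ 2 := by
    funext y s
    show deriv (fun z => 2 * (z / R + φ s) / R) y = _
    exact (((((hasDerivAt_id y).div_const R).add_const (φ s)).const_mul 2).div_const R).deriv.trans
      (by first | (simp only [id_eq]; push_cast; ring) | (push_cast; ring) | ring)
  have hPP : pdxR (pdxR (fun x t => (x / R + φ t) ^ 2)) = fun _ _ => 2 / R ^ 2 := by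
    rw [hP, hPP']
  have hPPP : pdxR (pdxR (pdxR (fun x t => (x / R + φ t) ^ 2))) = fun _ _ => (0 : ℝ) := by
    rw [hPP]
    funext y s
    exact deriv_const y _
  have hT : pdtR (fun x t => (x / R + φ t) ^ 2) = fun x t => 2 * (x / R + φ t) * deriv φ t := by
    funext y s
    show deriv (fun σ => (y / R + φ σ) ^ 2) s = _
    exact (((hasDerivAt_const s (y / R)).add (hdφ s)).pow 2).deriv.trans (by simp only [Pi.add_apply]; ring)
  have hTP : pdtR (pdxR (fun x t => (x / R + φ t) ^ 2)) = fun _ s => 2 * deriv φ s / R := by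
    rw [hP]
    funext y s
    show deriv (fun σ => 2 * (y / R + φ σ) / R) s = _
    exact ((((hasDerivAt_const s (y / R)).add (hdφ s)).const_mul 2).div_const R).deriv.trans
      (by first | (simp only [id_eq]; push_cast; ring) | (push_cast; ring) | ring)
  have hTT : pdtR (pdtR (fun x t => (x / R + φ t) ^ 2))
      = fun y s => 2 * deriv φ s ^ 2 + 2 * (y / R + φ s) * deriv (deriv φ) s := by
    rw [hT]
    funext y s
    show deriv (fun σ => 2 * (y / R + φ σ) * deriv φ σ) s = _
    exact ((((hasDerivAt_const s (y / R)).add (hdφ s)).const_mul 2).mul (hdφ' s)).deriv.trans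
      (by simp only [Pi.add_apply]; ring)
  -- smoothness of the coefficients
  have hb : ContDiff ℝ ((⊤ : ℕ∞) : WithTop ℕ∞) (fun p : ℝ × ℝ => p.1 / R + φ p.2) :=
    (contDiff_fst.div_const R).add (hφi.comp contDiff_snd)
  have hvv : ContDiff ℝ ((⊤ : ℕ∞) : WithTop ℕ∞) (fun p : ℝ × ℝ => deriv φ p.2) :=
    hφ'.comp contDiff_snd
  have hSm1 : Sm (fun y s => ((2 * (y / R + φ s) / R : ℝ) : ℂ)) :=
    Sm_cast ((contDiff_const.mul hb).div_const R)
  have hSm3 : Sm (fun y s => ((2 * (y / R + φ s) * deriv φ s : ℝ) : ℂ)) :=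
    Sm_cast ((contDiff_const.mul hb).mul hvv)
  have hSm5 : Sm (fun y s => ((2 * deriv φ s / R : ℝ) : ℂ)) :=
    Sm_cast ((contDiff_const.mul hvv).div_const R)
  have hdx1 : pdx (fun y s => ((2 * (y / R + φ s) / R : ℝ) : ℂ))
      = fun _ _ => ((2 / R ^ 2 : ℝ) : ℂ) :=
    pdx_cast_fun (fun y s =>
      (((((hasDerivAt_id y).div_const R).add_const (φ s)).const_mul 2).div_const R).congr_deriv
        (by first | (simp only [id_eq]; push_cast; ring) | (push_cast; ring) | ring))
  have hdt1 : pdt (fun y s => ((2 * (y / R + φ s) / R : ℝ) : ℂ))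
      = fun _ s => ((2 * deriv φ s / R : ℝ) : ℂ) :=
    pdt_cast_fun (fun y s =>
      ((((hasDerivAt_const s (y / R)).add (hdφ s)).const_mul 2).div_const R).congr_deriv
        (by first | (simp only [id_eq]; push_cast; ring) | (push_cast; ring) | ring))
  have hdx3 : pdx (fun y s => ((2 * (y / R + φ s) * deriv φ s : ℝ) : ℂ))
      = fun _ s => ((2 * deriv φ s / R : ℝ) : ℂ) :=
    pdx_cast_fun (fun y s =>
      ((((((hasDerivAt_id y).div_const R).add_const (φ s)).const_mul 2)).mul_const
        (deriv φ s)).congr_deriv (by first | (simp only [id_eq]; push_cast; ring) | (push_cast; ring) | ring))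
  have hdt3 : pdt (fun y s => ((2 * (y / R + φ s) * deriv φ s : ℝ) : ℂ))
      = fun y s => ((2 * deriv φ s ^ 2 + 2 * (y / R + φ s) * deriv (deriv φ) s : ℝ) : ℂ) :=
    pdt_cast_fun (fun y s =>
      ((((hasDerivAt_const s (y / R)).add (hdφ s)).const_mul 2).mul (hdφ' s)).congr_deriv
        (by simp only [Pi.add_apply]; ring))
  have hdx5 : pdx (fun y s => ((2 * deriv φ s / R : ℝ) : ℂ)) = fun _ _ => ((0 : ℝ) : ℂ) :=
    pdx_cast_fun (fun y s => hasDerivAt_const y _)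
  have hdx5' : pdx (fun y s => ((2 * deriv φ s / R : ℝ) : ℂ)) = (0 : ℝ → ℝ → ℂ) := by
    rw [hdx5]; funext y s; simp
  delta Sop Aop
  rw [hPPP, hTT, hTP, hPP, hT, hP]
  beta_reduce
  simp only [Complex.ofReal_zero, mul_zero, zero_mul, sub_zero, pdxn_two, pdxn_three]
  have convL4 : (fun y s => ((6 * a * (2 * deriv φ s / R)
          - 18 * a ^ 3 * (2 * (y / R + φ s) / R) ^ 2 * (2 / R ^ 2) : ℝ) : ℂ) * pdx f y s)
      = ((fun (_ _ : ℝ) => 6 * (a : ℂ)) * (fun y s => ((2 * deriv φ s / R : ℝ) : ℂ))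
          - (fun (_ _ : ℝ) => 18 * (a : ℂ) ^ 3) * (fun y s => ((2 * (y / R + φ s) / R : ℝ) : ℂ)) ^ 2
            * (fun (_ _ : ℝ) => ((2 / R ^ 2 : ℝ) : ℂ))) * pdx f := by
    funext y s
    simp only [Pi.mul_apply, Pi.sub_apply, Pi.pow_apply]
    push_cast; ring
  have convR3 : ((-3 * a ^ 3 * (2 / R ^ 2) ^ 3
        + a * (2 * deriv φ t ^ 2 + 2 * (x / R + φ t) * deriv (deriv φ) t)
        + 6 * a ^ 3 * (2 * (x / R + φ t) / R) ^ 2 * (2 * deriv φ t / R)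
        + 9 * a ^ 5 * (2 * (x / R + φ t) / R) ^ 4 * (2 / R ^ 2) : ℝ) : ℂ)
      = -3 * (a : ℂ) ^ 3 * ((2 / R ^ 2 : ℝ) : ℂ) ^ 3
        + (a : ℂ) * ((2 * deriv φ t ^ 2 + 2 * (x / R + φ t) * deriv (deriv φ) t : ℝ) : ℂ)
        + 6 * (a : ℂ) ^ 3 * ((2 * (x / R + φ t) / R : ℝ) : ℂ) ^ 2 * ((2 * deriv φ t / R : ℝ) : ℂ)
        + 9 * (a : ℂ) ^ 5 * ((2 * (x / R + φ t) / R : ℝ) : ℂ) ^ 4 * ((2 / R ^ 2 : ℝ) : ℂ) := by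
    push_cast; ring
  rw [convL4, convR3]
  exact key (a : ℂ) ((2 / R ^ 2 : ℝ) : ℂ) f
    (fun y s => ((2 * (y / R + φ s) / R : ℝ) : ℂ))
    (fun y s => ((2 * deriv φ s / R : ℝ) : ℂ))
    (fun y s => ((2 * (y / R + φ s) * deriv φ s : ℝ) : ℂ))
    (fun y s => ((2 * deriv φ s ^ 2 + 2 * (y / R + φ s) * deriv (deriv φ) s : ℝ) : ℂ))
    _ _ hSmf hSm1 hSm5 hSm3 hdx1 hdt1 hdx5' hdx3 hdt3 rfl rfl x t
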